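/- arXiv:2501.03657 — 3 statements merged into one kernel-verified Lean document; each statement's English description precedes it below -/
import Mathlib

section
/- Every n×n matrix S with nonnegative real entries has a real eigenvalue equal to its spectral radius ρ(S). -/
/-!
Let `A` be `S` viewed over `ℂ` and `μ` an eigenvalue of maximal modulus `ρ = ‖μ‖`. If `ρ` were
not an eigenvalue, then `ρ > 0` and the resolvent `x ↦ (1 - x • A)⁻¹` would be continuous at
`x = ρ⁻¹`. For `0 < x < ρ⁻¹` it is the Neumann series `∑ xᵏ • Aᵏ`, whose entries have the
nonnegative coefficients `(Sᵏ)ᵢⱼ`; by monotone convergence (Pringsheim's argument) these series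
still converge at `x = ρ⁻¹`. Since `‖μ⁻¹‖ = ρ⁻¹`, the series `∑ (μ⁻¹ • A)ᵏ` then converges
absolutely, so `1 - μ⁻¹ • A` is invertible, contradicting `μ ∈ spectrum ℂ A`.
-/

open Filter Topology Finset
open scoped NNReal ENNReal Matrix.Norms.Operator

theorem summable_mul_pow_of_hasSum_of_tendsto {f : ℕ → ℝ} (hf : ∀ k, 0 ≤ f k) {x₀ : ℝ}
    (hx₀ : 0 < x₀) {g : ℝ → ℝ} {L : ℝ} (hg : Tendsto g (𝓝[<] x₀) (𝓝 L))
    (hsum : ∀ x ∈ Set.Ioo 0 x₀, HasSum (fun k ↦ f k * x ^ k) (g x)) :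
    Summable fun k ↦ f k * x₀ ^ k := by
  refine summable_of_sum_range_le (c := L) (fun k ↦ mul_nonneg (hf k) (pow_nonneg hx₀.le k))
    fun N ↦ ?_
  have hpartial : Tendsto (fun x ↦ ∑ k ∈ range N, f k * x ^ k) (𝓝[<] x₀)
      (𝓝 (∑ k ∈ range N, f k * x₀ ^ k)) :=
    ((continuous_finsetSum _ fun k _ ↦ by fun_prop).tendsto x₀).mono_left nhdsWithin_le_nhds
  refine le_of_tendsto_of_tendsto hpartial hg ?_
  filter_upwards [Ioo_mem_nhdsLT hx₀] with x hx
  exact sum_le_hasSum _ (fun k _ ↦ mul_nonneg (hf k) (pow_nonneg hx.1.le k)) (hsum x hx)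

theorem Summable.isUnit_one_sub {R : Type*} [Ring R] [TopologicalSpace R] [IsTopologicalRing R]
    [T2Space R] {x : R} (h : Summable (x ^ ·)) : IsUnit (1 - x) :=
  ⟨⟨1 - x, ∑' k, x ^ k, h.one_sub_mul_tsum_pow, h.tsum_pow_mul_one_sub⟩, rfl⟩

namespace spectrum

theorem notMem_iff_isUnit_one_sub_inv_smul {𝕜 A : Type*} [Field 𝕜] [Ring A] [Algebra 𝕜 A]
    {a : A} {μ : 𝕜} (hμ : μ ≠ 0) : μ ∉ spectrum 𝕜 a ↔ IsUnit (1 - μ⁻¹ • a) := by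
  rw [notMem_iff, Algebra.algebraMap_eq_smul_one]
  exact IsUnit.smul_sub_iff_sub_inv_smul (Units.mk0 μ hμ) a

theorem hasSum_inverse_one_sub_smul {A : Type*} [NormedRing A] [NormedAlgebra ℂ A]
    [CompleteSpace A] (a : A) {z : ℂ} (hz : (‖z‖₊ : ℝ≥0∞) < (spectralRadius ℂ a)⁻¹) :
    HasSum (fun k ↦ z ^ k • a ^ k) (Ring.inverse (1 - z • a)) := by
  obtain ⟨r, hzr, hr⟩ := ENNReal.lt_iff_exists_nnreal_btwn.mp hz
  have hr_pos : 0 < r := ENNReal.coe_pos.mp (zero_le.trans_lt hzr)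
  -- the resolvent is holomorphic on the ball of radius `r`, so its Taylor series converges there
  have hseries := (hasFPowerSeriesOnBall_inverse_one_sub_smul ℂ a).exchange_radius
    ((differentiableOn_inverse_one_sub_smul hr).hasFPowerSeriesOnBall hr_pos)
  simpa using hseries.hasSum (y := z) (by simpa [edist_zero_right, ← coe_nnnorm] using hzr)

end spectrum

namespace Matrix

variable {ι : Type*} [Fintype ι] [DecidableEq ι]

theorem notMem_spectrum_of_summable_norm_pow_apply {𝕜 : Type*} [NormedField 𝕜] [CompleteSpace 𝕜]
    {A : Matrix ι ι 𝕜} {μ : 𝕜} (hμ : μ ≠ 0)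
    (h : ∀ i j, Summable fun k ↦ ‖(A ^ k) i j‖ * ‖μ‖⁻¹ ^ k) : μ ∉ spectrum 𝕜 A := by
  rw [spectrum.notMem_iff_isUnit_one_sub_inv_smul hμ]
  refine Summable.isUnit_one_sub ?_
  refine Pi.summable.2 fun i ↦ Pi.summable.2 fun j ↦ ?_
  refine (h i j).of_norm_bounded fun k ↦ le_of_eq ?_
  rw [smul_pow, smul_apply, norm_smul, norm_pow, norm_inv, mul_comm]

theorem summable_norm_pow_apply_mul_inv_pow_of_notMem_spectrum {S : Matrix ι ι ℝ}
    (hS : ∀ i j, 0 ≤ S i j) {r : ℝ} (hr : 0 < r)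
    (hρ : spectralRadius ℂ (S.map Complex.ofReal) ≤ ENNReal.ofReal r)
    (hr_spec : (r : ℂ) ∉ spectrum ℂ (S.map Complex.ofReal)) (i j : ι) :
    Summable fun k ↦ ‖((S.map Complex.ofReal) ^ k) i j‖ * r⁻¹ ^ k := by
  set A := S.map Complex.ofReal
  have hunit : IsUnit (1 - ((r⁻¹ : ℝ) : ℂ) • A) := by
    rw [Complex.ofReal_inv]
    exact (spectrum.notMem_iff_isUnit_one_sub_inv_smul (by exact_mod_cast hr.ne')).1 hr_spec
  have hinv : ContinuousAt Ring.inverse (1 - ((r⁻¹ : ℝ) : ℂ) • A) :=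
    hunit.unit_spec ▸ NormedRing.inverse_continuousAt hunit.unit
  have hcont : ContinuousAt (fun x : ℝ ↦ (Ring.inverse (1 - (x : ℂ) • A) i j).re) r⁻¹ :=
    (by fun_prop : Continuous fun M : Matrix ι ι ℂ ↦ (M i j).re).continuousAt.comp
      (hinv.comp (f := fun x : ℝ ↦ 1 - (x : ℂ) • A) (by fun_prop))
  refine summable_mul_pow_of_hasSum_of_tendsto (fun k ↦ norm_nonneg _) (inv_pos.2 hr)
    (hcont.tendsto.mono_left nhdsWithin_le_nhds) fun x hx ↦ ?_
  have hx_lt : (‖(x : ℂ)‖₊ : ℝ≥0∞) < (spectralRadius ℂ A)⁻¹ :=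
    calc (‖(x : ℂ)‖₊ : ℝ≥0∞) = ENNReal.ofReal x := by
          rw [← ENNReal.ofReal_coe_nnreal, coe_nnnorm, Complex.norm_real,
            Real.norm_of_nonneg hx.1.le]
      _ < ENNReal.ofReal r⁻¹ := (ENNReal.ofReal_lt_ofReal_iff (inv_pos.2 hr)).2 hx.2
      _ = (ENNReal.ofReal r)⁻¹ := ENNReal.ofReal_inv_of_pos hr
      _ ≤ (spectralRadius ℂ A)⁻¹ := ENNReal.inv_le_inv.2 hρ
  have hentry := Complex.hasSum_re
    (Pi.hasSum.1 (Pi.hasSum.1 (spectrum.hasSum_inverse_one_sub_smul A hx_lt) i) j)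
  convert hentry using 2 with k
  have hpow : A ^ k = (S ^ k).map Complex.ofReal := (S.map_pow Complex.ofRealHom k).symm
  simp [hpow, ← Complex.ofReal_pow, abs_of_nonneg (pow_apply_nonneg hS k i j), mul_comm]

end Matrix

/-- Every `n × n` real matrix with nonnegative entries has a real eigenvalue
equal to its spectral radius: there is a nonnegative real `r` in the (complex)
spectrum of `S` such that every element of the spectrum has norm at most `r`. -/
theorem exists_nonneg_real_eigenvalue_eq_spectralRadius
    {n : ℕ} (S : Matrix (Fin n) (Fin n) ℝ)
    (hS : ∀ i j, 0 ≤ S i j) :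
    0 < n → ∃ r : ℝ, 0 ≤ r ∧ (r : ℂ) ∈ spectrum ℂ (S.map (Complex.ofReal)) ∧
      ∀ μ ∈ spectrum ℂ (S.map (Complex.ofReal)), ‖μ‖ ≤ r := by
  intro hn
  have : Nonempty (Fin n) := ⟨⟨0, hn⟩⟩
  obtain ⟨μ, hμ, hμρ⟩ := spectrum.exists_nnnorm_eq_spectralRadius (S.map Complex.ofReal)
  refine ⟨‖μ‖, norm_nonneg μ, ?_, fun ν hν ↦ ?_⟩
  · by_contra hρ
    have hμ0 : μ ≠ 0 := by
      rintro rfl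
      exact hρ (by simpa using hμ)
    refine Matrix.notMem_spectrum_of_summable_norm_pow_apply hμ0 ?_ hμ
    exact Matrix.summable_norm_pow_apply_mul_inv_pow_of_notMem_spectrum hS (norm_pos_iff.2 hμ0)
      (by rw [← hμρ, ofReal_norm, enorm_eq_nnnorm]) hρ
  · exact_mod_cast (le_iSup₂ (α := ℝ≥0∞) ν hν).trans_eq hμρ.symm
end

section
/- Let X be an n×n random matrix with independent centered entries with E|X_{ij}|^2 = s_{ij}. Then for the reverse characteristic polynomial q(z) = det(I - zX), one has E|q(z)|^2 = perm(I + |z|^2 S), where S = [s_{ij}]. -/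
/-!
Expand `|det A|² = det A · conj (det A)` over pairs of permutations `(σ, τ)`. The term of
`(σ, τ)` is `∏ i, A i (σ i) * conj (A i (τ i))`, which regroups as a product, over the entries
`(i, j)`, of functions of the single entry `A i j`; by independence its expectation is the
product of the entrywise expectations, namely the second moment `E|A i (σ i)|²` in the rows
where `σ i = τ i` and `E A i (σ i) * conj (E A i (τ i))` in the others.

For `A = I - z X` the entry `(i, j)` has mean `δ i j` and second moment `δ i j + |z|² s i j`.
If `σ ≠ τ`, a row with `σ i ≠ τ i` contributes `δ i (σ i) * δ i (τ i) = 0`, and the terms with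
`σ = τ` add up to `perm (I + |z|² S)`.
-/

open Matrix MeasureTheory ProbabilityTheory

def Matrix.perm {m : Type*} [DecidableEq m] [Fintype m] {R : Type*} [CommRing R]
    (M : Matrix m m R) : R :=
  ∑ σ : Equiv.Perm m, ∏ i, M i (σ i)

open ComplexConjugate Equiv Equiv.Perm Finset

section Combinatorics

variable {m : Type*} [Fintype m] [DecidableEq m]

theorem Fintype.prod_ite_graph {R : Type*} [CommMonoid R] (σ : Perm m) (φ : m × m → R) :
    ∏ p : m × m, (if p.2 = σ p.1 then φ p else 1) = ∏ i, φ (i, σ i) := by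
  simp [Fintype.prod_prod_type]

theorem Fintype.prod_ite_graph_pair {R : Type*} [CommMonoid R] (σ τ : Perm m)
    (v a b : m × m → R) :
    ∏ p : m × m, (if p.2 = σ p.1 then (if p.2 = τ p.1 then v p else a p)
        else if p.2 = τ p.1 then b p else 1) =
      ∏ i, if σ i = τ i then v (i, σ i) else a (i, σ i) * b (i, τ i) := by
  rw [Fintype.prod_prod_type]
  refine Finset.prod_congr rfl fun i _ ↦ ?_
  split_ifs with h
  · simp +contextual [h]
  · rw [← Fintype.prod_ite_eq' (σ i) fun j ↦ a (i, j),
      ← Fintype.prod_ite_eq' (τ i) fun j ↦ b (i, j), ← Finset.prod_mul_distrib]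
    refine Finset.prod_congr rfl fun j _ ↦ ?_
    split_ifs <;> simp_all

theorem Matrix.det_mul_conj_det (A : Matrix m m ℂ) :
    A.det * conj A.det =
      ∑ σ : Perm m, ∑ τ : Perm m, (sign σ * sign τ) • ∏ i, A i (σ i) * conj (A i (τ i)) := by
  rw [← det_transpose, det_apply, map_sum, sum_mul_sum]
  simp [prod_mul_distrib, smul_mul_smul_comm]

theorem sum_sign_smul_prod_eq_perm (V : Matrix m m ℝ) :
    ∑ σ : Perm m, ∑ τ : Perm m, (sign σ * sign τ) •
      ∏ i, (if σ i = τ i then (V i (σ i) : ℂ)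
        else (1 : Matrix m m ℂ) i (σ i) * conj ((1 : Matrix m m ℂ) i (τ i))) = V.perm := by
  rw [Matrix.perm, Complex.ofReal_sum]
  refine sum_congr rfl fun σ _ ↦ ?_
  rw [sum_eq_single σ]
  · rw [Int.units_mul_self, one_smul, Complex.ofReal_prod]
    exact prod_congr rfl fun i _ ↦ if_pos rfl
  · intro τ _ hτ
    obtain ⟨i, hi⟩ : ∃ i, σ i ≠ τ i := not_forall.1 fun h ↦ hτ (Equiv.ext h).symm
    refine smul_eq_zero_of_right _ (prod_eq_zero (mem_univ i) ?_)
    rw [if_neg hi, Matrix.one_apply, Matrix.one_apply]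
    split_ifs with h₁ h₂
    · exact absurd (h₁.symm.trans h₂) hi
    all_goals simp
  · simp

end Combinatorics

section EntryFactor

variable {m : Type*} [DecidableEq m]

def entryFactor (σ τ : Perm m) (p : m × m) (w : ℂ) : ℂ :=
  (if p.2 = σ p.1 then w else 1) * (if p.2 = τ p.1 then conj w else 1)

theorem continuous_entryFactor (σ τ : Perm m) (p : m × m) :
    Continuous (entryFactor σ τ p) := by
  unfold entryFactor
  split_ifs <;> fun_prop

theorem prod_entryFactor [Fintype m] (σ τ : Perm m) (A : Matrix m m ℂ) :
    ∏ p : m × m, entryFactor σ τ p (A p.1 p.2) = ∏ i, A i (σ i) * conj (A i (τ i)) := by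
  simp only [entryFactor, prod_mul_distrib, Fintype.prod_ite_graph]

end EntryFactor

section Expectation

variable {Ω : Type*} [MeasurableSpace Ω] {μ : Measure Ω}

theorem ProbabilityTheory.iIndepFun.integrable_fun_prod {ι 𝕜 : Type*} [Fintype ι] [RCLike 𝕜]
    {X : ι → Ω → 𝕜} (hX : iIndepFun X μ) (hint : ∀ i, Integrable (X i) μ) :
    Integrable (fun ω ↦ ∏ i, X i ω) μ := by
  set Y := fun i ↦ (hint i).aestronglyMeasurable.mk (X i)
  have hXY : ∀ i, X i =ᵐ[μ] Y i := fun i ↦ (hint i).aestronglyMeasurable.ae_eq_mk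
  have hYm : ∀ i, Measurable (Y i) := fun i ↦
    (hint i).aestronglyMeasurable.stronglyMeasurable_mk.measurable
  have hprod : (fun ω ↦ ∏ i, Y i ω) =ᵐ[μ] fun ω ↦ ∏ i, X i ω := by
    filter_upwards [ae_all_iff.2 hXY] with ω hω
    simp [hω]
  refine Integrable.congr ⟨?_, ?_⟩ hprod
  · exact Finset.aestronglyMeasurable_fun_prod _ fun i _ ↦ (hYm i).aestronglyMeasurable
  · have hindep : iIndepFun (fun i ω ↦ ‖Y i ω‖ₑ) μ :=
      (hX.congr hXY).comp (fun _ ↦ enorm) fun _ ↦ measurable_enorm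
    have henorm (ω : Ω) : ‖∏ i, Y i ω‖ₑ = ∏ i, ‖Y i ω‖ₑ := by
      simp only [enorm_eq_nnnorm, nnnorm_prod, ENNReal.ofNNReal_finsetProd]
    simp only [hasFiniteIntegral_iff_enorm, henorm]
    rw [lintegral_prod_eq_prod_lintegral_of_indepFun _ _ hindep fun i ↦ (hYm i).enorm]
    exact ENNReal.prod_lt_top fun i _ ↦ ((hint i).congr (hXY i)).2

theorem integral_norm_add_sq_of_integral_eq_zero {E : Type*} [NormedAddCommGroup E]
    [InnerProductSpace ℝ E] [CompleteSpace E] [IsProbabilityMeasure μ] (c : E) {ξ : Ω → E}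
    (hξ : MemLp ξ 2 μ) (hξ₀ : ∫ ω, ξ ω ∂μ = 0) :
    ∫ ω, ‖c + ξ ω‖ ^ 2 ∂μ = ‖c‖ ^ 2 + ∫ ω, ‖ξ ω‖ ^ 2 ∂μ := by
  have hinner : ∫ ω, inner ℝ c (ξ ω) ∂μ = 0 := by
    rw [integral_inner (hξ.integrable one_le_two), hξ₀, inner_zero_right]
  have hint : Integrable (fun ω ↦ inner ℝ c (ξ ω)) μ :=
    (hξ.integrable one_le_two).const_inner c
  have hlin : Integrable (fun ω ↦ ‖c‖ ^ 2 + 2 * inner ℝ c (ξ ω)) μ :=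
    (integrable_const _).add (hint.const_mul 2)
  simp_rw [norm_add_sq_real]
  rw [integral_add hlin (hξ.integrable_norm_pow two_ne_zero),
    integral_add (integrable_const _) (hint.const_mul 2), integral_const_mul, hinner]
  simp

theorem integral_norm_const_sub_mul_sq [IsProbabilityMeasure μ] (c z : ℂ) {ξ : Ω → ℂ}
    (hξ : MemLp ξ 2 μ) (hξ₀ : ∫ ω, ξ ω ∂μ = 0) :
    ∫ ω, ‖c - z * ξ ω‖ ^ 2 ∂μ = ‖c‖ ^ 2 + ‖z‖ ^ 2 * ∫ ω, ‖ξ ω‖ ^ 2 ∂μ := by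
  simp_rw [sub_eq_add_neg, ← neg_mul]
  rw [integral_norm_add_sq_of_integral_eq_zero c (hξ.const_mul (-z))
    (by rw [integral_const_mul, hξ₀, mul_zero])]
  simp only [norm_mul, norm_neg, mul_pow, integral_const_mul]

variable {m : Type*} [DecidableEq m]

theorem integrable_entryFactor [IsFiniteMeasure μ] (σ τ : Perm m) (p : m × m) {ξ : Ω → ℂ}
    (hξ : MemLp ξ 2 μ) :
    Integrable (fun ω ↦ entryFactor σ τ p (ξ ω)) μ := by
  unfold entryFactor
  split_ifs
  · simpa [Complex.mul_conj'] using (hξ.integrable_norm_pow two_ne_zero).ofReal (𝕜 := ℂ)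
  · simpa using hξ.integrable one_le_two
  · simpa using Complex.conjCLE.toContinuousLinearMap.integrable_comp (hξ.integrable one_le_two)
  · simp

theorem integral_entryFactor [IsProbabilityMeasure μ] (σ τ : Perm m) (p : m × m) (ξ : Ω → ℂ) :
    ∫ ω, entryFactor σ τ p (ξ ω) ∂μ =
      if p.2 = σ p.1 then
        (if p.2 = τ p.1 then ((∫ ω, ‖ξ ω‖ ^ 2 ∂μ : ℝ) : ℂ) else ∫ ω, ξ ω ∂μ)
      else if p.2 = τ p.1 then conj (∫ ω, ξ ω ∂μ) else 1 := by
  unfold entryFactor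
  split_ifs
  · simp only [Complex.mul_conj']
    exact_mod_cast integral_ofReal (𝕜 := ℂ)
  all_goals simp [integral_conj]

variable [Fintype m] {A : Ω → Matrix m m ℂ}

theorem integrable_prod_mul_conj (hA : iIndepFun (fun p : m × m ↦ fun ω ↦ A ω p.1 p.2) μ)
    (hL2 : ∀ i j, MemLp (fun ω ↦ A ω i j) 2 μ) (σ τ : Perm m) :
    Integrable (fun ω ↦ ∏ i, A ω i (σ i) * conj (A ω i (τ i))) μ := by
  have := hA.isProbabilityMeasure
  simp_rw [← prod_entryFactor]
  exact (hA.comp _ fun p ↦ (continuous_entryFactor σ τ p).measurable).integrable_fun_prod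
    fun p ↦ integrable_entryFactor σ τ p (hL2 p.1 p.2)

theorem integral_prod_mul_conj (hA : iIndepFun (fun p : m × m ↦ fun ω ↦ A ω p.1 p.2) μ)
    (hm : ∀ i j, AEMeasurable (fun ω ↦ A ω i j) μ) (σ τ : Perm m) :
    ∫ ω, ∏ i, A ω i (σ i) * conj (A ω i (τ i)) ∂μ =
      ∏ i, if σ i = τ i then ((∫ ω, ‖A ω i (σ i)‖ ^ 2 ∂μ : ℝ) : ℂ)
        else (∫ ω, A ω i (σ i) ∂μ) * conj (∫ ω, A ω i (τ i) ∂μ) := by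
  have := hA.isProbabilityMeasure
  simp_rw [← prod_entryFactor]
  rw [hA.integral_fun_prod_comp (fun p ↦ hm p.1 p.2)
      fun p ↦ (continuous_entryFactor σ τ p).aestronglyMeasurable]
  simp_rw [integral_entryFactor]
  exact Fintype.prod_ite_graph_pair σ τ _ _ _

theorem integral_det_mul_conj_det (hA : iIndepFun (fun p : m × m ↦ fun ω ↦ A ω p.1 p.2) μ)
    (hL2 : ∀ i j, MemLp (fun ω ↦ A ω i j) 2 μ) :
    ∫ ω, (A ω).det * conj (A ω).det ∂μ =
      ∑ σ : Perm m, ∑ τ : Perm m, (sign σ * sign τ) •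
        ∏ i, if σ i = τ i then ((∫ ω, ‖A ω i (σ i)‖ ^ 2 ∂μ : ℝ) : ℂ)
          else (∫ ω, A ω i (σ i) ∂μ) * conj (∫ ω, A ω i (τ i) ∂μ) := by
  have hint (σ τ : Perm m) : Integrable (fun ω ↦ (sign σ * sign τ) •
      ∏ i, A ω i (σ i) * conj (A ω i (τ i))) μ :=
    (integrable_prod_mul_conj hA hL2 σ τ).smul _
  simp_rw [det_mul_conj_det]
  rw [integral_finsetSum _ fun σ _ ↦ integrable_finsetSum _ fun τ _ ↦ hint σ τ]
  refine sum_congr rfl fun σ _ ↦ ?_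
  rw [integral_finsetSum _ fun τ _ ↦ hint σ τ]
  refine sum_congr rfl fun τ _ ↦ ?_
  simp only [Units.smul_def, zsmul_eq_mul, integral_const_mul]
  rw [integral_prod_mul_conj hA fun i j ↦ (hL2 i j).aestronglyMeasurable.aemeasurable]

end Expectation

/-- Let `X` be an `n × n` random matrix with independent centered entries with
`E|X_ij|² = s_ij`. Then for the reverse characteristic polynomial
`q(z) = det (I - z X)` one has `E|q(z)|² = perm (I + |z|² S)`. -/
theorem integral_sq_norm_rev_charpoly_eq_perm
    {Ω : Type*} [MeasurableSpace Ω] (μ : Measure Ω) [IsProbabilityMeasure μ]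
    {n : ℕ} (X : Ω → Matrix (Fin n) (Fin n) ℂ) (s : Matrix (Fin n) (Fin n) ℝ)
    (hindep : iIndepFun
      (fun p : Fin n × Fin n => fun ω => X ω p.1 p.2) μ)
    (hL2 : ∀ i j, MemLp (fun ω => X ω i j) 2 μ)
    (hcen : ∀ i j, ∫ ω, X ω i j ∂μ = 0)
    (hvar : ∀ i j, ∫ ω, ‖X ω i j‖ ^ 2 ∂μ = s i j)
    (z : ℂ) :
    ∫ ω, ‖(1 - z • X ω).det‖ ^ 2 ∂μ = ((1 : Matrix (Fin n) (Fin n) ℝ) + ‖z‖ ^ 2 • s).perm := by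
  set A : Ω → Matrix (Fin n) (Fin n) ℂ := fun ω ↦ 1 - z • X ω
  have hA : iIndepFun (fun p : Fin n × Fin n ↦ fun ω ↦ A ω p.1 p.2) μ :=
    hindep.comp (fun p w ↦ (1 : Matrix (Fin n) (Fin n) ℂ) p.1 p.2 - z * w) fun p ↦ by fun_prop
  have hL2A (i j) : MemLp (fun ω ↦ A ω i j) 2 μ := (memLp_const _).sub ((hL2 i j).const_mul z)
  have hmean (i j) : ∫ ω, A ω i j ∂μ = (1 : Matrix (Fin n) (Fin n) ℂ) i j := by
    simp [A, integral_sub (integrable_const _) (((hL2 i j).integrable one_le_two).const_mul z),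
      integral_const_mul, hcen]
  have hsq (i j) :
      ∫ ω, ‖A ω i j‖ ^ 2 ∂μ = ((1 : Matrix (Fin n) (Fin n) ℝ) + ‖z‖ ^ 2 • s) i j := by
    simp only [A, Matrix.sub_apply, Matrix.smul_apply, smul_eq_mul]
    rw [integral_norm_const_sub_mul_sq _ z (hL2 i j) (hcen i j), hvar, Matrix.add_apply,
      Matrix.smul_apply, smul_eq_mul, Matrix.one_apply, Matrix.one_apply]
    split_ifs <;> simp
  apply Complex.ofReal_injective
  calc ((∫ ω, ‖(A ω).det‖ ^ 2 ∂μ : ℝ) : ℂ) = ∫ ω, (A ω).det * conj (A ω).det ∂μ := by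
        rw [← integral_complex_ofReal]
        simp_rw [Complex.mul_conj', Complex.ofReal_pow]
    _ = _ := by
        rw [integral_det_mul_conj_det hA hL2A]
        simp_rw [hsq, hmean]
        exact sum_sign_smul_prod_eq_perm _
end

section
/- Let K_n ≥ log n and let S^{(n)} be the n×n random matrix with independent entries S_{ij} = B_{ij}/K_n where B_{ij} is Bernoulli with success probability K_n·𝐒(i/n,j/n)/n for a continuous 𝐒 : [0,1]² → [0,1]. Then there is a constant C > 0 such that, almost surely, limsup_n of the maximum row sum of S^{(n)} is at most C. -/
open MeasureTheory ProbabilityTheory Filter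

/-! A row sum `∑ⱼ Bᵢⱼ` is a sum of independent indicators whose means add up to at most `K n`,
so the exponential Chernoff bound at `t = 2` gives `P[∑ⱼ Bᵢⱼ ≥ e² K n] ≤ exp (-(e² + 1) K n)`,
which is at most `n ^ (-(e² + 1))` because `K n ≥ log n`. After the union bound over the `n` rows
these probabilities are summable, so by Borel–Cantelli almost surely every row sum is eventually
below `e² K n`, and `C = e²` works. -/

open Real Finset

section Chernoff

variable {Ω : Type*} [MeasurableSpace Ω] {μ : Measure Ω}

lemma mgf_le_exp_of_zero_or_one [IsProbabilityMeasure μ] {X : Ω → ℝ} (hX : Measurable X)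
    (h01 : ∀ ω, X ω = 0 ∨ X ω = 1) (t : ℝ) :
    mgf X μ t ≤ exp ((exp t - 1) * μ.real {ω | X ω = 1}) := by
  have hexp : (fun ω => exp (t * X ω))
      = fun ω => 1 + (exp t - 1) * {ω | X ω = 1}.indicator 1 ω := by
    funext ω
    rcases h01 ω with h | h <;> simp [h]
  have hmeas : MeasurableSet {ω | X ω = 1} := hX (measurableSet_singleton 1)
  have hmgf : mgf X μ t = 1 + (exp t - 1) * μ.real {ω | X ω = 1} := by
    rw [mgf, hexp, integral_add (integrable_const 1)
      (((integrable_const 1).indicator hmeas).const_mul _), integral_const_mul,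
      integral_indicator_one hmeas]
    simp
  rw [hmgf, add_comm]
  exact add_one_le_exp _

lemma measureReal_sum_ge_le_exp_of_iIndepFun_zero_or_one {ι : Type*} {X : ι → Ω → ℝ}
    (hind : iIndepFun X μ) (hmeas : ∀ i, Measurable (X i))
    (h01 : ∀ i ω, X i ω = 0 ∨ X i ω = 1) (s : Finset ι) {t m : ℝ} (ht : 0 ≤ t)
    (hm : ∑ i ∈ s, μ.real {ω | X i ω = 1} ≤ m) (a : ℝ) :
    μ.real {ω | a ≤ ∑ i ∈ s, X i ω} ≤ exp (-t * a + (exp t - 1) * m) := by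
  have := hind.isProbabilityMeasure
  have hsum_le : ∀ ω, ∑ i ∈ s, X i ω ≤ #s := fun ω => by
    simpa using sum_le_sum fun i (_ : i ∈ s) => (h01 i ω).elim (·.le.trans zero_le_one) (·.le)
  have hint : Integrable (fun ω => exp (t * (∑ i ∈ s, X i) ω)) μ := by
    refine .of_bound (by fun_prop) (exp (t * #s)) (ae_of_all _ fun ω => ?_)
    rw [norm_of_nonneg (exp_pos _).le, Finset.sum_apply]
    gcongr
    exact hsum_le ω
  have hmgf : mgf (∑ i ∈ s, X i) μ t ≤ exp ((exp t - 1) * m) := by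
    rw [hind.mgf_sum hmeas]
    calc ∏ i ∈ s, mgf (X i) μ t
        ≤ ∏ i ∈ s, exp ((exp t - 1) * μ.real {ω | X i ω = 1}) :=
          prod_le_prod (fun _ _ => mgf_nonneg) fun i _ =>
            mgf_le_exp_of_zero_or_one (hmeas i) (h01 i) t
      _ = exp ((exp t - 1) * ∑ i ∈ s, μ.real {ω | X i ω = 1}) := by rw [← exp_sum, mul_sum]
      _ ≤ exp ((exp t - 1) * m) := by
          gcongr
          linarith [add_one_le_exp t]
  calc μ.real {ω | a ≤ ∑ i ∈ s, X i ω}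
      = μ.real {ω | a ≤ (∑ i ∈ s, X i) ω} := by simp only [Finset.sum_apply]
    _ ≤ exp (-t * a) * mgf (∑ i ∈ s, X i) μ t := measure_ge_le_exp_mul_mgf a ht hint
    _ ≤ exp (-t * a) * exp ((exp t - 1) * m) := by gcongr
    _ = exp (-t * a + (exp t - 1) * m) := (exp_add _ _).symm

end Chernoff

section BorelCantelli

variable {Ω : Type*} [MeasurableSpace Ω] {μ : Measure Ω} [IsFiniteMeasure μ]

lemma ae_eventually_notMem_of_measureReal_le_summable {s : ℕ → Set Ω} {f : ℕ → ℝ}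
    (hs : ∀ n, μ.real (s n) ≤ f n) (hf : Summable f) :
    ∀ᵐ ω ∂μ, ∀ᶠ n in atTop, ω ∉ s n := by
  have hsum : Summable fun n => μ.real (s n) :=
    hf.of_nonneg_of_le (fun _ => measureReal_nonneg) hs
  refine ae_eventually_notMem
    (ne_top_of_le_ne_top (ENNReal.ofReal_ne_top (r := ∑' n, μ.real (s n))) ?_)
  rw [ENNReal.ofReal_tsum_of_nonneg (fun _ => measureReal_nonneg) hsum]
  exact ENNReal.tsum_le_tsum fun n => (ENNReal.ofReal_toReal (measure_ne_top μ _)).ge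

lemma ae_eventually_forall_lt_of_summable {R : (n : ℕ) → Fin n → Ω → ℝ} {a q : ℕ → ℝ}
    (hR : ∀ n i, μ.real {ω | a n ≤ R n i ω} ≤ q n) (hq : Summable fun n : ℕ => n * q n) :
    ∀ᵐ ω ∂μ, ∀ᶠ n in atTop, ∀ i, R n i ω < a n := by
  have hunion : ∀ n, μ.real (⋃ i, {ω | a n ≤ R n i ω}) ≤ n * q n := fun n =>
    calc μ.real (⋃ i, {ω | a n ≤ R n i ω}) ≤ ∑ i, μ.real {ω | a n ≤ R n i ω} :=
          measureReal_iUnion_fintype_le _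
      _ ≤ ∑ _i : Fin n, q n := sum_le_sum fun i _ => hR n i
      _ = n * q n := by simp
  filter_upwards [ae_eventually_notMem_of_measureReal_le_summable hunion hq] with ω hω
  filter_upwards [hω] with n hn i
  simpa using fun h : a n ≤ R n i ω => hn (Set.mem_iUnion.2 ⟨i, h⟩)

end BorelCantelli

lemma summable_natCast_mul_exp_neg_mul_of_log_le {K : ℕ → ℝ} (hK : ∀ n : ℕ, log n ≤ K n)
    {c : ℝ} (hc : 2 < c) : Summable fun n : ℕ => n * exp (-c * K n) := by
  refine (summable_nat_rpow.2 (by linarith : 1 - c < -1)).of_nonneg_of_le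
    (fun n => by positivity) fun n => ?_
  rcases Nat.eq_zero_or_pos n with rfl | hn
  · simp [zero_rpow (by linarith : 1 - c ≠ 0)]
  have hn' : (0 : ℝ) < n := by exact_mod_cast hn
  calc (n : ℝ) * exp (-c * K n) ≤ n * exp (log n * -c) :=
        mul_le_mul_of_nonneg_left (exp_le_exp.2 (by nlinarith [hK n])) hn'.le
    _ = (n : ℝ) ^ (1 - c) := by
        rw [← rpow_def_of_pos hn', sub_eq_add_neg, rpow_add hn', rpow_one]

lemma limsup_iSup_sum_div_le_of_eventually {x : (n : ℕ) → Fin n → Fin n → ℝ}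
    (hx : ∀ n i j, 0 ≤ x n i j) {K : ℕ → ℝ} (hK : ∀ n, 0 < K n) {C : ℝ} (hC : 0 ≤ C)
    (h : ∀ᶠ n in atTop, ∀ i, ∑ j, x n i j < C * K n) :
    limsup (fun n => ⨆ i, ∑ j, x n i j / K n) atTop ≤ C := by
  refine limsup_le_of_le (isCoboundedUnder_le_of_le atTop (x := 0) fun n =>
    iSup_nonneg fun i => sum_nonneg fun j _ => div_nonneg (hx n i j) (hK n).le) ?_
  filter_upwards [h] with n hn
  refine Real.iSup_le (fun i => ?_) hC
  rw [← sum_div, div_le_iff₀ (hK n)]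
  exact (hn i).le

theorem limsup_max_row_sum_le_of_bernoulli_profile_general
    {Ω : Type*} [MeasurableSpace Ω] (μ : Measure Ω) [IsProbabilityMeasure μ]
    (bS : ℝ → ℝ → ℝ)
    (hrange : ∀ x y, bS x y ∈ Set.Icc (0 : ℝ) 1)
    (K : ℕ → ℝ) (hKpos : ∀ n, 0 < K n)
    (hKlog : ∀ n : ℕ, Real.log n ≤ K n)
    (B : (n : ℕ) → Ω → Fin n → Fin n → ℝ)
    (hmeas : ∀ n (i j : Fin n), Measurable fun ω => B n ω i j)
    (h01 : ∀ n (i j : Fin n) ω, B n ω i j = 0 ∨ B n ω i j = 1)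
    (hprob : ∀ (n : ℕ) (i j : Fin n),
      μ {ω | B n ω i j = 1} =
        ENNReal.ofReal (K n * bS (((i : ℝ) + 1) / n) (((j : ℝ) + 1) / n) / n))
    (hindep : ∀ n : ℕ, iIndepFun
      (fun p : Fin n × Fin n => fun ω => B n ω p.1 p.2) μ) :
    ∃ C : ℝ, 0 < C ∧
      ∀ᵐ ω ∂μ,
        limsup (fun n : ℕ => ⨆ i : Fin n, ∑ j : Fin n, B n ω i j / K n) atTop ≤ C := by
  refine ⟨exp 2, exp_pos 2, ?_⟩
  have hentry : ∀ n (i j : Fin n), μ.real {ω | B n ω i j = 1} ≤ K n / n := fun n i j => by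
    rw [measureReal_def, hprob, ENNReal.toReal_ofReal
      (div_nonneg (mul_nonneg (hKpos n).le (hrange _ _).1) n.cast_nonneg)]
    gcongr
    exact mul_le_of_le_one_right (hKpos n).le (hrange _ _).2
  have hmean : ∀ n (i : Fin n), ∑ j, μ.real {ω | B n ω i j = 1} ≤ K n := fun n i => by
    refine (sum_le_sum fun j _ => hentry n i j).trans ?_
    rcases Nat.eq_zero_or_pos n with rfl | hn
    · simpa using (hKpos 0).le
    · simp [mul_div_cancel₀ (K n) (Nat.cast_ne_zero.2 hn.ne' : (n : ℝ) ≠ 0)]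
  -- Chernoff at threshold `e² K` with `t = 2`: `-2 e² K + (e² - 1) K = -(e² + 1) K`.
  have hrow : ∀ n (i : Fin n),
      μ.real {ω | exp 2 * K n ≤ ∑ j, B n ω i j} ≤ exp (-(exp 2 + 1) * K n) := fun n i => by
    convert measureReal_sum_ge_le_exp_of_iIndepFun_zero_or_one
      ((hindep n).precomp (Prod.mk_right_injective i)) (fun j => hmeas n i j)
      (fun j => h01 n i j) univ zero_le_two (hmean n i) (exp 2 * K n) using 2
    ring
  have hsmall : ∀ᵐ ω ∂μ, ∀ᶠ n in atTop, ∀ i, ∑ j, B n ω i j < exp 2 * K n :=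
    ae_eventually_forall_lt_of_summable hrow
      (summable_natCast_mul_exp_neg_mul_of_log_le hKlog (by linarith [one_lt_exp_iff.2 two_pos]))
  filter_upwards [hsmall] with ω hω
  exact limsup_iSup_sum_div_le_of_eventually
    (fun n i j => (h01 n i j ω).elim (·.ge) (· ▸ zero_le_one)) hKpos (exp_pos 2).le hω

/-- Sparse Erdős–Rényi sampling of a continuous variance profile:
if `K n ≥ log n` and `S^(n)_{ij} = B^(n)_{ij} / K n` with independent Bernoulli
entries `B^(n)_{ij}` of parameter `K n · bS(i/n, j/n) / n` for a continuous
`bS : [0,1]² → [0,1]`, then there is a constant `C > 0` such that almost surely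
`limsup_n max_i ∑_j S^(n)_{ij} ≤ C`. -/
theorem limsup_max_row_sum_le_of_bernoulli_profile
    {Ω : Type*} [MeasurableSpace Ω] (μ : Measure Ω) [IsProbabilityMeasure μ]
    (bS : ℝ → ℝ → ℝ)
    (hcont : ContinuousOn (Function.uncurry bS) (Set.Icc 0 1 ×ˢ Set.Icc 0 1))
    (hrange : ∀ x y, bS x y ∈ Set.Icc (0 : ℝ) 1)
    (K : ℕ → ℝ) (hKpos : ∀ n, 0 < K n)
    (hKlog : ∀ n : ℕ, Real.log n ≤ K n)
    (hKle : ∀ n : ℕ, 0 < n → K n ≤ n)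
    (B : (n : ℕ) → Ω → Fin n → Fin n → ℝ)
    (hmeas : ∀ n (i j : Fin n), Measurable fun ω => B n ω i j)
    (h01 : ∀ n (i j : Fin n) ω, B n ω i j = 0 ∨ B n ω i j = 1)
    (hprob : ∀ (n : ℕ) (i j : Fin n),
      μ {ω | B n ω i j = 1} =
        ENNReal.ofReal (K n * bS (((i : ℝ) + 1) / n) (((j : ℝ) + 1) / n) / n))
    (hindep : ∀ n : ℕ, iIndepFun
      (fun p : Fin n × Fin n => fun ω => B n ω p.1 p.2) μ) :
    ∃ C : ℝ, 0 < C ∧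
      ∀ᵐ ω ∂μ,
        limsup (fun n : ℕ => ⨆ i : Fin n, ∑ j : Fin n, B n ω i j / K n) atTop ≤ C :=
  limsup_max_row_sum_le_of_bernoulli_profile_general μ bS hrange K hKpos hKlog B hmeas h01 hprob
    hindep
end
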